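/- Let ⊗ be a continuous t-norm with residuum ⇒. Consider fuzzy ALC semantics in which ⊓ and ∃ are interpreted via ⊗, ∀ and concept inclusion via ⇒, and ⊔ and ¬ via arbitrary fixed functions e : [0,1]² → [0,1] and n : [0,1] → [0,1]. Let K be a fuzzy knowledge base, C and D concepts, and A an atomic concept occurring neither in K nor in C nor in D. Then K ∪ {⟨C ⊑ D ≥ 1⟩} is satisfiable iff K ∪ {⟨C ⊑ A ⊓ D ≥ 1⟩, ⟨A ⊓ D ⊑ C ≥ 1⟩} is satisfiable; moreover the same equivalence holds for satisfiability in interpretations with finite domain. -/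

import Mathlib

/-- ALC concepts over countably many atomic concepts and role names. -/
inductive GConcept : Type where
  | atom : ℕ → GConcept
  | top  : GConcept
  | bot  : GConcept
  | conj : GConcept → GConcept → GConcept
  | disj : GConcept → GConcept → GConcept
  | neg  : GConcept → GConcept
  | all  : ℕ → GConcept → GConcept
  | ex   : ℕ → GConcept → GConcept
deriving DecidableEq

/-- `f` is a continuous t-norm (on `[0,1]`, coded as a function on `ℝ`). -/
def IsContinuousTnorm (f : ℝ → ℝ → ℝ) : Prop :=
  (∀ x ∈ Set.Icc (0:ℝ) 1, ∀ y ∈ Set.Icc (0:ℝ) 1, f x y ∈ Set.Icc (0:ℝ) 1) ∧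
  (∀ x ∈ Set.Icc (0:ℝ) 1, ∀ y ∈ Set.Icc (0:ℝ) 1, f x y = f y x) ∧
  (∀ x ∈ Set.Icc (0:ℝ) 1, ∀ y ∈ Set.Icc (0:ℝ) 1, ∀ z ∈ Set.Icc (0:ℝ) 1,
    f (f x y) z = f x (f y z)) ∧
  (∀ x ∈ Set.Icc (0:ℝ) 1, ∀ x' ∈ Set.Icc (0:ℝ) 1, ∀ y ∈ Set.Icc (0:ℝ) 1,
    ∀ y' ∈ Set.Icc (0:ℝ) 1, x ≤ x' → y ≤ y' → f x y ≤ f x' y') ∧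
  (∀ x ∈ Set.Icc (0:ℝ) 1, f x 1 = x) ∧
  ContinuousOn (fun p : ℝ × ℝ => f p.1 p.2) (Set.Icc (0:ℝ) 1 ×ˢ Set.Icc (0:ℝ) 1)

/-- The residuum `x ⇒ y = sup {z ∈ [0,1] : f x z ≤ y}` of `f`. -/
noncomputable def res (f : ℝ → ℝ → ℝ) (x y : ℝ) : ℝ :=
  sSup {z ∈ Set.Icc (0:ℝ) 1 | f x z ≤ y}

/-- A fuzzy interpretation. -/
structure Interp : Type 1 where
  Δ : Type
  nonempty : Nonempty Δ
  atom : ℕ → Δ → ℝ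
  role : ℕ → Δ → Δ → ℝ
  ind : ℕ → Δ
  atom_mem : ∀ i x, atom i x ∈ Set.Icc (0:ℝ) 1
  role_mem : ∀ j x y, role j x y ∈ Set.Icc (0:ℝ) 1

/-- Value of a concept at a point, where `⊓`/`∃` are interpreted via the t-norm `f`,
`∀` via the residuum of `f`, `⊔` via `e` and `¬` via `n`. -/
noncomputable def gval (f e : ℝ → ℝ → ℝ) (n : ℝ → ℝ) (I : Interp) :
    GConcept → I.Δ → ℝ
  | GConcept.atom i, x => I.atom i x
  | GConcept.top, _ => 1
  | GConcept.bot, _ => 0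
  | GConcept.conj C D, x => f (gval f e n I C x) (gval f e n I D x)
  | GConcept.disj C D, x => e (gval f e n I C x) (gval f e n I D x)
  | GConcept.neg C, x => n (gval f e n I C x)
  | GConcept.all j C, x => ⨅ y, res f (I.role j x y) (gval f e n I C y)
  | GConcept.ex j C, x => ⨆ y, f (I.role j x y) (gval f e n I C y)

/-- Degree of subsumption `(C ⊑ D)^I`. -/
noncomputable def gsub (f e : ℝ → ℝ → ℝ) (n : ℝ → ℝ) (I : Interp) (C D : GConcept) : ℝ :=
  ⨅ x, res f (gval f e n I C x) (gval f e n I D x)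

/-- Axioms of fuzzy knowledge bases. -/
inductive KAxiom : Type where
  | assertGE : ℕ → GConcept → ℚ → KAxiom
  | assertLE : ℕ → GConcept → ℚ → KAxiom
  | roleGE : ℕ → ℕ → ℕ → ℚ → KAxiom
  | gci : GConcept → GConcept → ℚ → KAxiom
deriving DecidableEq

/-- The rational constant of an axiom lies in `[0,1]`. -/
def axBounded : KAxiom → Prop
  | KAxiom.assertGE _ _ q => 0 ≤ q ∧ q ≤ 1
  | KAxiom.assertLE _ _ q => 0 ≤ q ∧ q ≤ 1
  | KAxiom.roleGE _ _ _ q => 0 ≤ q ∧ q ≤ 1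
  | KAxiom.gci _ _ q => 0 ≤ q ∧ q ≤ 1

/-- Satisfaction of an axiom in an interpretation. -/
def gsat (f e : ℝ → ℝ → ℝ) (n : ℝ → ℝ) (I : Interp) : KAxiom → Prop
  | KAxiom.assertGE a C q => (q : ℝ) ≤ gval f e n I C (I.ind a)
  | KAxiom.assertLE a C q => gval f e n I C (I.ind a) ≤ (q : ℝ)
  | KAxiom.roleGE a b j q => (q : ℝ) ≤ I.role j (I.ind a) (I.ind b)
  | KAxiom.gci C D q => (q : ℝ) ≤ gsub f e n I C D

/-- Satisfaction of a set of axioms. -/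
def gsatKB (f e : ℝ → ℝ → ℝ) (n : ℝ → ℝ) (I : Interp) (K : Finset KAxiom) : Prop :=
  ∀ ax ∈ K, gsat f e n I ax

/-- Witnessed interpretation: all the relevant infima and suprema are attained. -/
def gWitnessed (f e : ℝ → ℝ → ℝ) (n : ℝ → ℝ) (I : Interp) : Prop :=
  ∀ (C D : GConcept) (j : ℕ) (x : I.Δ),
    (∃ y, gval f e n I (GConcept.ex j C) x = f (I.role j x y) (gval f e n I C y)) ∧
    (∃ y, gval f e n I (GConcept.all j C) x = res f (I.role j x y) (gval f e n I C y)) ∧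
    (∃ y, gsub f e n I C D = res f (gval f e n I C y) (gval f e n I D y))

/-- The atomic concept `A_i` occurs in a concept. -/
def occursC (i : ℕ) : GConcept → Prop
  | GConcept.atom i' => i = i'
  | GConcept.top => False
  | GConcept.bot => False
  | GConcept.conj C D => occursC i C ∨ occursC i D
  | GConcept.disj C D => occursC i C ∨ occursC i D
  | GConcept.neg C => occursC i C
  | GConcept.all _ C => occursC i C
  | GConcept.ex _ C => occursC i C

/-- The atomic concept `A_i` occurs in an axiom. -/
def occursA (i : ℕ) : KAxiom → Prop
  | KAxiom.assertGE _ C _ => occursC i C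
  | KAxiom.assertLE _ C _ => occursC i C
  | KAxiom.roleGE _ _ _ _ => False
  | KAxiom.gci C D _ => occursC i C ∨ occursC i D

/-! If `C ≤ D` pointwise, interpret the fresh atom `A` as the residuum `D ⇒ C`. For a continuous
t-norm the map `z ↦ d ⊗ z` takes every value in `[0, d]` (intermediate value theorem), and the
residuum is attained, so `(d ⇒ c) ⊗ d = c` whenever `c ≤ d`: then `A ⊓ D` and `C` agree everywhere.
Conversely `A ⊓ D ≤ D` always. A fresh atom does not affect `K`, `C` or `D`, and the domain is left
unchanged, which covers finite satisfiability as well. -/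

open Set

theorem res_mem (f : ℝ → ℝ → ℝ) (x y : ℝ) : res f x y ∈ Icc (0:ℝ) 1 :=
  ⟨Real.sSup_nonneg fun _ hz => hz.1.1, Real.sSup_le (fun _ hz => hz.1.2) zero_le_one⟩

theorem bddAbove_res_set (f : ℝ → ℝ → ℝ) (x y : ℝ) :
    BddAbove {z ∈ Icc (0:ℝ) 1 | f x z ≤ y} :=
  ⟨1, fun _ hz => hz.1.2⟩

namespace IsContinuousTnorm

variable {f : ℝ → ℝ → ℝ}

theorem mem (hf : IsContinuousTnorm f) {x y : ℝ} (hx : x ∈ Icc (0:ℝ) 1)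
    (hy : y ∈ Icc (0:ℝ) 1) : f x y ∈ Icc (0:ℝ) 1 :=
  hf.1 x hx y hy

theorem comm (hf : IsContinuousTnorm f) {x y : ℝ} (hx : x ∈ Icc (0:ℝ) 1)
    (hy : y ∈ Icc (0:ℝ) 1) : f x y = f y x :=
  hf.2.1 x hx y hy

theorem mono (hf : IsContinuousTnorm f) {x x' y y' : ℝ} (hx : x ∈ Icc (0:ℝ) 1)
    (hx' : x' ∈ Icc (0:ℝ) 1) (hy : y ∈ Icc (0:ℝ) 1) (hy' : y' ∈ Icc (0:ℝ) 1)
    (hxx' : x ≤ x') (hyy' : y ≤ y') : f x y ≤ f x' y' :=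
  hf.2.2.2.1 x hx x' hx' y hy y' hy' hxx' hyy'

theorem map_one_right (hf : IsContinuousTnorm f) {x : ℝ} (hx : x ∈ Icc (0:ℝ) 1) : f x 1 = x :=
  hf.2.2.2.2.1 x hx

theorem map_zero_right (hf : IsContinuousTnorm f) {x : ℝ} (hx : x ∈ Icc (0:ℝ) 1) :
    f x 0 = 0 := by
  have h01 : (0:ℝ) ∈ Icc (0:ℝ) 1 := left_mem_Icc.2 zero_le_one
  have h11 : (1:ℝ) ∈ Icc (0:ℝ) 1 := right_mem_Icc.2 zero_le_one
  refine le_antisymm ?_ (hf.mem hx h01).1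
  calc f x 0 ≤ f 1 0 := hf.mono hx h11 h01 h01 hx.2 le_rfl
    _ = 0 := by rw [hf.comm h11 h01, hf.map_one_right h01]

theorem map_le_right (hf : IsContinuousTnorm f) {x y : ℝ} (hx : x ∈ Icc (0:ℝ) 1)
    (hy : y ∈ Icc (0:ℝ) 1) : f x y ≤ y := by
  have h11 : (1:ℝ) ∈ Icc (0:ℝ) 1 := right_mem_Icc.2 zero_le_one
  calc f x y ≤ f 1 y := hf.mono hx h11 hy hy hx.2 le_rfl
    _ = y := by rw [hf.comm h11 hy, hf.map_one_right hy]

theorem continuousOn_right (hf : IsContinuousTnorm f) {x : ℝ} (hx : x ∈ Icc (0:ℝ) 1) :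
    ContinuousOn (f x) (Icc (0:ℝ) 1) :=
  hf.2.2.2.2.2.comp (continuous_const.prodMk continuous_id).continuousOn fun _ hz => ⟨hx, hz⟩

theorem map_res_le (hf : IsContinuousTnorm f) {x y : ℝ} (hx : x ∈ Icc (0:ℝ) 1) (hy : 0 ≤ y) :
    f x (res f x y) ≤ y := by
  have hne : {z ∈ Icc (0:ℝ) 1 | f x z ≤ y}.Nonempty :=
    ⟨0, left_mem_Icc.2 zero_le_one, (hf.map_zero_right hx).trans_le hy⟩
  have hclosed : IsClosed {z ∈ Icc (0:ℝ) 1 | f x z ≤ y} :=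
    (hf.continuousOn_right hx).preimage_isClosed_of_isClosed isClosed_Icc isClosed_Iic
  exact ((isLUB_csSup hne (bddAbove_res_set f x y)).mem_of_isClosed hne hclosed).2

theorem one_le_res_iff (hf : IsContinuousTnorm f) {x y : ℝ} (hx : x ∈ Icc (0:ℝ) 1) (hy : 0 ≤ y) :
    1 ≤ res f x y ↔ x ≤ y := by
  constructor
  · intro h
    have hres : res f x y = 1 := le_antisymm (res_mem f x y).2 h
    simpa [hres, hf.map_one_right hx] using hf.map_res_le hx hy
  · intro hxy
    exact le_csSup (bddAbove_res_set f x y)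
      ⟨right_mem_Icc.2 zero_le_one, (hf.map_one_right hx).trans_le hxy⟩

theorem map_res_of_le (hf : IsContinuousTnorm f) {x y : ℝ} (hx : x ∈ Icc (0:ℝ) 1)
    (hy : y ∈ Icc (0:ℝ) 1) (hyx : y ≤ x) : f x (res f x y) = y := by
  refine le_antisymm (hf.map_res_le hx hy.1) ?_
  have hy' : y ∈ Icc (f x 0) (f x 1) := by
    rw [hf.map_zero_right hx, hf.map_one_right hx]
    exact ⟨hy.1, hyx⟩
  obtain ⟨z, hz, hfz⟩ := intermediate_value_Icc zero_le_one (hf.continuousOn_right hx) hy'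
  calc y = f x z := hfz.symm
    _ ≤ f x (res f x y) := hf.mono hx hx hz (res_mem f x y) le_rfl
        (le_csSup (bddAbove_res_set f x y) ⟨hz, hfz.le⟩)

end IsContinuousTnorm

theorem iInf_mem_Icc_zero_one {ι : Sort*} [Nonempty ι] {g : ι → ℝ}
    (hg : ∀ i, g i ∈ Icc (0:ℝ) 1) : ⨅ i, g i ∈ Icc (0:ℝ) 1 :=
  ⟨Real.iInf_nonneg fun i => (hg i).1,
    ciInf_le_of_le ⟨0, forall_mem_range.2 fun i => (hg i).1⟩ (Classical.arbitrary ι)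
      (hg _).2⟩

theorem iSup_mem_Icc_zero_one {ι : Sort*} {g : ι → ℝ} (hg : ∀ i, g i ∈ Icc (0:ℝ) 1) :
    ⨆ i, g i ∈ Icc (0:ℝ) 1 :=
  ⟨Real.iSup_nonneg fun i => (hg i).1, Real.iSup_le (fun i => (hg i).2) zero_le_one⟩

section Semantics

variable {f e : ℝ → ℝ → ℝ} {n : ℝ → ℝ}

theorem gval_mem (hf : IsContinuousTnorm f)
    (he : ∀ x ∈ Icc (0:ℝ) 1, ∀ y ∈ Icc (0:ℝ) 1, e x y ∈ Icc (0:ℝ) 1)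
    (hn : ∀ x ∈ Icc (0:ℝ) 1, n x ∈ Icc (0:ℝ) 1) (I : Interp) (E : GConcept) (x : I.Δ) :
    gval f e n I E x ∈ Icc (0:ℝ) 1 := by
  have := I.nonempty
  induction E generalizing x with
  | atom j => exact I.atom_mem j x
  | top => exact right_mem_Icc.2 zero_le_one
  | bot => exact left_mem_Icc.2 zero_le_one
  | conj A B ihA ihB => exact hf.mem (ihA x) (ihB x)
  | disj A B ihA ihB => exact he _ (ihA x) _ (ihB x)
  | neg A ihA => exact hn _ (ihA x)
  | all j A ihA => exact iInf_mem_Icc_zero_one fun y => res_mem f _ _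
  | ex j A ihA => exact iSup_mem_Icc_zero_one fun y => hf.mem (I.role_mem j x y) (ihA y)

theorem gsat_gci_one_iff (hf : IsContinuousTnorm f)
    (he : ∀ x ∈ Icc (0:ℝ) 1, ∀ y ∈ Icc (0:ℝ) 1, e x y ∈ Icc (0:ℝ) 1)
    (hn : ∀ x ∈ Icc (0:ℝ) 1, n x ∈ Icc (0:ℝ) 1) (I : Interp) (A B : GConcept) :
    gsat f e n I (KAxiom.gci A B 1) ↔ ∀ x, gval f e n I A x ≤ gval f e n I B x := by
  have := I.nonempty
  have hbdd : BddBelow (range fun x => res f (gval f e n I A x) (gval f e n I B x)) :=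
    ⟨0, forall_mem_range.2 fun _ => (res_mem f _ _).1⟩
  simp only [gsat, gsub, Rat.cast_one, le_ciInf_iff hbdd]
  exact forall_congr' fun x =>
    hf.one_le_res_iff (gval_mem hf he hn I A x) (gval_mem hf he hn I B x).1

theorem gsatKB_insert {I : Interp} {ax : KAxiom} {K : Finset KAxiom} :
    gsatKB f e n I (insert ax K) ↔ gsat f e n I ax ∧ gsatKB f e n I K :=
  Finset.forall_mem_insert _ _ _

end Semantics

def Interp.updateAtom (I : Interp) (i : ℕ) (g : I.Δ → ℝ) (hg : ∀ x, g x ∈ Icc (0:ℝ) 1) :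
    Interp where
  Δ := I.Δ
  nonempty := I.nonempty
  atom := Function.update I.atom i g
  role := I.role
  ind := I.ind
  atom_mem j x := by
    rcases eq_or_ne j i with rfl | hj
    · simpa using hg x
    · simpa [Function.update_of_ne hj] using I.atom_mem j x
  role_mem := I.role_mem

section UpdateAtom

variable {f e : ℝ → ℝ → ℝ} {n : ℝ → ℝ} {I : Interp} {i : ℕ} {g : I.Δ → ℝ}
  {hg : ∀ x, g x ∈ Icc (0:ℝ) 1}

theorem gval_conj_updateAtom_self (D : GConcept) (x : I.Δ) :
    gval f e n (I.updateAtom i g hg) (GConcept.conj (GConcept.atom i) D) x =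
      f (g x) (gval f e n (I.updateAtom i g hg) D x) := by
  simp [gval, Interp.updateAtom]

theorem gval_updateAtom_of_not_occursC {E : GConcept} (hE : ¬ occursC i E) (x : I.Δ) :
    gval f e n (I.updateAtom i g hg) E x = gval f e n I E x := by
  induction E generalizing x with
  | atom j => exact congrFun (Function.update_of_ne (Ne.symm hE) g I.atom) x
  | top | bot => rfl
  | conj A B ihA ihB | disj A B ihA ihB =>
      simp only [occursC, not_or] at hE
      simp only [gval, ihA hE.1, ihB hE.2]
  | neg A ihA => simp only [gval, ihA hE]
  | all j A ihA => exact iInf_congr fun y => congrArg _ (ihA hE y)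
  | ex j A ihA => exact iSup_congr fun y => congrArg _ (ihA hE y)

theorem gsub_updateAtom_of_not_occursC {A B : GConcept} (hA : ¬ occursC i A)
    (hB : ¬ occursC i B) : gsub f e n (I.updateAtom i g hg) A B = gsub f e n I A B :=
  iInf_congr fun (x : I.Δ) => by
    rw [gval_updateAtom_of_not_occursC hA x, gval_updateAtom_of_not_occursC hB x]

theorem gsat_updateAtom_of_not_occursA {ax : KAxiom} (hax : ¬ occursA i ax) :
    gsat f e n (I.updateAtom i g hg) ax ↔ gsat f e n I ax := by
  cases ax with
  | assertGE a E q => exact iff_of_eq (congrArg _ (gval_updateAtom_of_not_occursC hax (I.ind a)))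
  | assertLE a E q =>
      exact iff_of_eq (congrArg (· ≤ _) (gval_updateAtom_of_not_occursC hax (I.ind a)))
  | roleGE a b j q => rfl
  | gci A B q =>
      simp only [occursA, not_or] at hax
      exact iff_of_eq (congrArg _ (gsub_updateAtom_of_not_occursC hax.1 hax.2))

end UpdateAtom

section Normalization

variable {f e : ℝ → ℝ → ℝ} {n : ℝ → ℝ}

theorem gsatKB_gci_conj_atom_of_gsatKB (hf : IsContinuousTnorm f)
    (he : ∀ x ∈ Icc (0:ℝ) 1, ∀ y ∈ Icc (0:ℝ) 1, e x y ∈ Icc (0:ℝ) 1)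
    (hn : ∀ x ∈ Icc (0:ℝ) 1, n x ∈ Icc (0:ℝ) 1) {K : Finset KAxiom} {C D : GConcept} {i : ℕ}
    (hK : ∀ ax ∈ K, ¬ occursA i ax) (hC : ¬ occursC i C) (hD : ¬ occursC i D) {I : Interp}
    (hI : gsatKB f e n I (insert (KAxiom.gci C D 1) K)) :
    gsatKB f e n (I.updateAtom i (fun x => res f (gval f e n I D x) (gval f e n I C x))
        fun _ => res_mem f _ _)
      (insert (KAxiom.gci C (GConcept.conj (GConcept.atom i) D) 1)
        (insert (KAxiom.gci (GConcept.conj (GConcept.atom i) D) C 1) K)) := by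
  obtain ⟨hCD, hKI⟩ := gsatKB_insert.1 hI
  rw [gsat_gci_one_iff hf he hn] at hCD
  set I' := I.updateAtom i (fun x => res f (gval f e n I D x) (gval f e n I C x))
    fun _ => res_mem f _ _
  have hconj (x : I.Δ) :
      gval f e n I' (GConcept.conj (GConcept.atom i) D) x = gval f e n I' C x := by
    have hCx := gval_mem hf he hn I C x
    have hDx := gval_mem hf he hn I D x
    rw [gval_conj_updateAtom_self, gval_updateAtom_of_not_occursC hC,
      gval_updateAtom_of_not_occursC hD, hf.comm (res_mem f _ _) hDx,
      hf.map_res_of_le hDx hCx (hCD x)]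
  refine gsatKB_insert.2 ⟨(gsat_gci_one_iff hf he hn _ _ _).2 fun x => (hconj x).ge,
    gsatKB_insert.2 ⟨(gsat_gci_one_iff hf he hn _ _ _).2 fun x => (hconj x).le, ?_⟩⟩
  exact fun ax hax => (gsat_updateAtom_of_not_occursA (hK ax hax)).2 (hKI ax hax)

theorem gsatKB_of_gsatKB_gci_conj_atom (hf : IsContinuousTnorm f)
    (he : ∀ x ∈ Icc (0:ℝ) 1, ∀ y ∈ Icc (0:ℝ) 1, e x y ∈ Icc (0:ℝ) 1)
    (hn : ∀ x ∈ Icc (0:ℝ) 1, n x ∈ Icc (0:ℝ) 1) {K : Finset KAxiom} {C D : GConcept} {i : ℕ}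
    {I : Interp}
    (hI : gsatKB f e n I (insert (KAxiom.gci C (GConcept.conj (GConcept.atom i) D) 1)
        (insert (KAxiom.gci (GConcept.conj (GConcept.atom i) D) C 1) K))) :
    gsatKB f e n I (insert (KAxiom.gci C D 1) K) := by
  obtain ⟨hCAD, -, hKI⟩ := gsatKB_insert.1 hI |>.imp_right gsatKB_insert.1
  rw [gsat_gci_one_iff hf he hn] at hCAD
  refine gsatKB_insert.2 ⟨(gsat_gci_one_iff hf he hn _ _ _).2 fun x => ?_, hKI⟩
  exact (hCAD x).trans (hf.map_le_right (I.atom_mem i x) (gval_mem hf he hn I D x))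

end Normalization

theorem stmt15_general (f : ℝ → ℝ → ℝ) (hf : IsContinuousTnorm f)
    (e : ℝ → ℝ → ℝ) (n : ℝ → ℝ)
    (he : ∀ x ∈ Set.Icc (0:ℝ) 1, ∀ y ∈ Set.Icc (0:ℝ) 1, e x y ∈ Set.Icc (0:ℝ) 1)
    (hn : ∀ x ∈ Set.Icc (0:ℝ) 1, n x ∈ Set.Icc (0:ℝ) 1)
    (K : Finset KAxiom)
    (C D : GConcept) (i : ℕ)
    (hK : ∀ ax ∈ K, ¬ occursA i ax) (hC : ¬ occursC i C) (hD : ¬ occursC i D) :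
    ((∃ I : Interp, gsatKB f e n I (insert (KAxiom.gci C D 1) K)) ↔
     (∃ I : Interp, gsatKB f e n I
        (insert (KAxiom.gci C (GConcept.conj (GConcept.atom i) D) 1)
          (insert (KAxiom.gci (GConcept.conj (GConcept.atom i) D) C 1) K)))) ∧
    ((∃ I : Interp, Finite I.Δ ∧ gsatKB f e n I (insert (KAxiom.gci C D 1) K)) ↔
     (∃ I : Interp, Finite I.Δ ∧ gsatKB f e n I
        (insert (KAxiom.gci C (GConcept.conj (GConcept.atom i) D) 1)
          (insert (KAxiom.gci (GConcept.conj (GConcept.atom i) D) C 1) K)))) := by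
  refine ⟨⟨fun ⟨I, hI⟩ => ⟨_, gsatKB_gci_conj_atom_of_gsatKB hf he hn hK hC hD hI⟩,
      fun ⟨I, hI⟩ => ⟨I, gsatKB_of_gsatKB_gci_conj_atom hf he hn hI⟩⟩,
    -- `updateAtom` keeps the domain, so `hfin` transfers once the interpretation is fixed
    ⟨fun ⟨_, hfin, hI⟩ => ⟨_, by exact hfin, gsatKB_gci_conj_atom_of_gsatKB hf he hn hK hC hD hI⟩,
      fun ⟨I, hfin, hI⟩ => ⟨I, hfin, gsatKB_of_gsatKB_gci_conj_atom hf he hn hI⟩⟩⟩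

theorem stmt15 (f : ℝ → ℝ → ℝ) (hf : IsContinuousTnorm f)
    (e : ℝ → ℝ → ℝ) (n : ℝ → ℝ)
    (he : ∀ x ∈ Set.Icc (0:ℝ) 1, ∀ y ∈ Set.Icc (0:ℝ) 1, e x y ∈ Set.Icc (0:ℝ) 1)
    (hn : ∀ x ∈ Set.Icc (0:ℝ) 1, n x ∈ Set.Icc (0:ℝ) 1)
    (K : Finset KAxiom) (hKb : ∀ ax ∈ K, axBounded ax)
    (C D : GConcept) (i : ℕ)
    (hK : ∀ ax ∈ K, ¬ occursA i ax) (hC : ¬ occursC i C) (hD : ¬ occursC i D) :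
    ((∃ I : Interp, gsatKB f e n I (insert (KAxiom.gci C D 1) K)) ↔
     (∃ I : Interp, gsatKB f e n I
        (insert (KAxiom.gci C (GConcept.conj (GConcept.atom i) D) 1)
          (insert (KAxiom.gci (GConcept.conj (GConcept.atom i) D) C 1) K)))) ∧
    ((∃ I : Interp, Finite I.Δ ∧ gsatKB f e n I (insert (KAxiom.gci C D 1) K)) ↔
     (∃ I : Interp, Finite I.Δ ∧ gsatKB f e n I
        (insert (KAxiom.gci C (GConcept.conj (GConcept.atom i) D) 1)
          (insert (KAxiom.gci (GConcept.conj (GConcept.atom i) D) C 1) K)))) :=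
  stmt15_general f hf e n he hn K C D i hK hC hD
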